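/- arXiv:1907.00305 — 2 statements merged into one kernel-verified Lean document; each statement's English description precedes it below -/
import Mathlib

section
/- The Petersen graph is a brick. -/
open SimpleGraph

/-- A graph has a perfect matching. -/
def HasPerfectMatching {V : Type*} (G : SimpleGraph V) : Prop :=
  ∃ M : G.Subgraph, M.IsPerfectMatching

/-- `G` is 3-connected: at least 4 vertices, and deleting any at most 2
vertices leaves a connected graph. -/
def IsThreeConnected {V : Type*} [Fintype V] (G : SimpleGraph V) : Prop :=
  4 ≤ Fintype.card V ∧ ∀ S : Set V, S.ncard ≤ 2 → (G.induce Sᶜ).Connected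

/-- A brick: a 3-connected graph such that deleting any two distinct vertices
leaves a graph with a perfect matching. -/
def IsBrick {V : Type*} [Fintype V] (G : SimpleGraph V) : Prop :=
  IsThreeConnected G ∧
    ∀ u v : V, u ≠ v → HasPerfectMatching (G.induce ({u, v} : Set V)ᶜ)

/-- A minimal brick: a brick such that deleting any edge destroys brickness. -/
def IsMinimalBrick {V : Type*} [Fintype V] (G : SimpleGraph V) : Prop :=
  IsBrick G ∧ ∀ e ∈ G.edgeSet, ¬ IsBrick (G.deleteEdges {e})

/-- The Petersen graph as the Kneser graph K(5,2). -/
def petersen : SimpleGraph {s : Finset (Fin 5) // s.card = 2} :=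
  SimpleGraph.fromRel (fun a b => Disjoint a.1 b.1)

/-!
The permutations of `{0, …, 4}` act on the Petersen graph by automorphisms. This action is
transitive on vertices, and the stabiliser of `{0, 1}` is transitive both on its three neighbours
and on its six non-neighbours. Since connectivity of `G - S` and the existence of a perfect
matching in `G - S` are invariant under automorphisms, it suffices to check `S = ∅`, `S = {01}`,
`S = {01, 23}` and `S = {01, 02}`, which is a finite computation: connectivity by breadth-first
search and perfect matchings by exhibiting them.
-/

namespace SimpleGraph

variable {V W : Type*} {G : SimpleGraph V} {G' : SimpleGraph W}

def Iso.induceCompl (φ : G ≃g G') (s : Set V) : G.induce sᶜ ≃g G'.induce (φ '' s)ᶜ where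
  toEquiv := φ.toEquiv.subtypeEquiv fun x => by simp [φ.injective.mem_set_image]
  map_rel_iff' := φ.map_rel_iff

theorem Subgraph.IsPerfectMatching.map_iso {M : G.Subgraph} (hM : M.IsPerfectMatching)
    (φ : G ≃g G') : (M.map φ.toHom).IsPerfectMatching := by
  refine ⟨(Iso.isMatching_map φ).mpr hM.1, fun w => ?_⟩
  obtain ⟨v, rfl⟩ := φ.surjective w
  exact ⟨v, hM.2 v, rfl⟩

theorem hasPerfectMatching_of_involutive {f : V → V} (hf : Function.Involutive f)
    (hadj : ∀ v, G.Adj v (f v)) : HasPerfectMatching G := by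
  let M : G.Subgraph :=
    { verts := Set.univ
      Adj := fun v w => f v = w
      adj_sub := fun h => h ▸ hadj _
      edge_vert := fun _ => trivial
      symm := ⟨fun v w h => h ▸ hf v⟩ }
  exact ⟨M, M.isPerfectMatching_iff.mpr fun v => ⟨f v, rfl, fun _ => Eq.symm⟩⟩

theorem hasPerfectMatching_induce_of_involutive {s : Set V} {f : V → V}
    (hf : ∀ v ∈ s, f v ∈ s ∧ f (f v) = v ∧ G.Adj v (f v)) :
    HasPerfectMatching (G.induce s) :=
  hasPerfectMatching_of_involutive (f := fun v => ⟨f v, (hf v v.2).1⟩)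
    (fun v => Subtype.ext (hf v v.2).2.1) (fun v => (hf v v.2).2.2)

section BreadthFirstSearch

variable [Fintype V] [DecidableEq V] (G) [DecidableRel G.Adj]

def bfsStep (s : Finset V) : Finset V :=
  s ∪ ({v | ∃ w ∈ s, G.Adj w v} : Finset V)

theorem reachable_of_mem_iterate_bfsStep {v₀ : V} :
    ∀ {n v}, v ∈ (G.bfsStep)^[n] {v₀} → G.Reachable v₀ v
  | 0, _, hv => Finset.mem_singleton.mp hv ▸ Reachable.rfl
  | n + 1, v, hv => by
    rw [Function.iterate_succ_apply', bfsStep, Finset.mem_union, Finset.mem_filter] at hv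
    obtain hv | ⟨-, w, hw, hwv⟩ := hv
    · exact reachable_of_mem_iterate_bfsStep hv
    · exact (reachable_of_mem_iterate_bfsStep hw).trans hwv.reachable

theorem connected_of_iterate_bfsStep_eq_univ (v₀ : V) (n : ℕ)
    (h : (G.bfsStep)^[n] {v₀} = Finset.univ) : G.Connected :=
  G.connected_iff_exists_forall_reachable.mpr
    ⟨v₀, fun v => G.reachable_of_mem_iterate_bfsStep (h ▸ Finset.mem_univ v)⟩

end BreadthFirstSearch

end SimpleGraph

theorem HasPerfectMatching.of_iso {V W : Type*} {G : SimpleGraph V} {G' : SimpleGraph W}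
    (h : HasPerfectMatching G) (φ : G ≃g G') : HasPerfectMatching G' :=
  h.elim fun _ hM => ⟨_, hM.map_iso φ⟩

abbrev PetersenVertex := {s : Finset (Fin 5) // s.card = 2}

instance : DecidableRel petersen.Adj := fun a b =>
  inferInstanceAs (Decidable (a ≠ b ∧ (Disjoint a.1 b.1 ∨ Disjoint b.1 a.1)))

namespace Petersen

def vtx (i j : Fin 5) (h : i ≠ j := by decide) : PetersenVertex := ⟨{i, j}, Finset.card_pair h⟩

def aut (σ : Equiv.Perm (Fin 5)) : petersen ≃g petersen where
  toEquiv := σ.finsetCongr.subtypeEquiv fun s => by simp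
  map_rel_iff' := by
    simp [petersen, Equiv.finsetCongr_apply, Finset.disjoint_map, ← Subtype.ext_iff]

set_option maxRecDepth 2000 in
theorem exists_aut_apply_eq : ∀ u, ∃ σ, aut σ (vtx 0 1) = u := by
  decide

theorem exists_aut_fixing_apply_eq :
    ∀ v, v ≠ vtx 0 1 → ∃ σ, aut σ (vtx 0 1) = vtx 0 1 ∧
      (aut σ (vtx 2 3) = v ∨ aut σ (vtx 0 2) = v) := by
  decide

theorem exists_iso_of_ne {u v : PetersenVertex} (huv : u ≠ v) :
    ∃ φ : petersen ≃g petersen, φ (vtx 0 1) = u ∧ (φ (vtx 2 3) = v ∨ φ (vtx 0 2) = v) := by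
  obtain ⟨τ, rfl⟩ := exists_aut_apply_eq u
  have hv : (aut τ).symm v ≠ vtx 0 1 := fun h => huv (by rw [← h, RelIso.apply_symm_apply])
  obtain ⟨σ, hσ, hσv⟩ := exists_aut_fixing_apply_eq _ hv
  refine ⟨(aut σ).trans (aut τ), by simp [hσ], ?_⟩
  rcases hσv with h | h <;> simp [h]

open Equiv in
theorem hasPerfectMatching_induce_compl_adj :
    HasPerfectMatching (petersen.induce ({vtx 0 1, vtx 2 3} : Set _)ᶜ) :=
  hasPerfectMatching_induce_of_involutive
    (f := ⇑(swap (vtx 0 2) (vtx 1 4) * swap (vtx 0 3) (vtx 2 4) * swap (vtx 0 4) (vtx 1 3) *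
      swap (vtx 1 2) (vtx 3 4)))
    (by decide)

open Equiv in
theorem hasPerfectMatching_induce_compl_nonadj :
    HasPerfectMatching (petersen.induce ({vtx 0 1, vtx 0 2} : Set _)ᶜ) :=
  hasPerfectMatching_induce_of_involutive
    (f := ⇑(swap (vtx 0 3) (vtx 1 4) * swap (vtx 0 4) (vtx 2 3) * swap (vtx 1 2) (vtx 3 4) *
      swap (vtx 1 3) (vtx 2 4)))
    (by decide)

theorem hasPerfectMatching_induce_compl_pair {u v : PetersenVertex} (huv : u ≠ v) :
    HasPerfectMatching (petersen.induce ({u, v} : Set _)ᶜ) := by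
  obtain ⟨φ, rfl, rfl | rfl⟩ := exists_iso_of_ne huv <;> rw [← Set.image_pair]
  · exact hasPerfectMatching_induce_compl_adj.of_iso (φ.induceCompl _)
  · exact hasPerfectMatching_induce_compl_nonadj.of_iso (φ.induceCompl _)

theorem connected_induce_compl_empty : (petersen.induce (∅ : Set PetersenVertex)ᶜ).Connected :=
  connected_of_iterate_bfsStep_eq_univ _ ⟨vtx 0 1, by decide⟩ 3 (by decide)

theorem connected_induce_compl_singleton : (petersen.induce ({vtx 0 1} : Set _)ᶜ).Connected :=
  connected_of_iterate_bfsStep_eq_univ _ ⟨vtx 0 2, by decide⟩ 3 (by decide)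

theorem connected_induce_compl_adj : (petersen.induce ({vtx 0 1, vtx 2 3} : Set _)ᶜ).Connected :=
  connected_of_iterate_bfsStep_eq_univ _ ⟨vtx 0 2, by decide⟩ 3 (by decide)

theorem connected_induce_compl_nonadj :
    (petersen.induce ({vtx 0 1, vtx 0 2} : Set _)ᶜ).Connected :=
  connected_of_iterate_bfsStep_eq_univ _ ⟨vtx 2 3, by decide⟩ 3 (by decide)

theorem connected_induce_compl_of_ncard_le_two {S : Set PetersenVertex} (hS : S.ncard ≤ 2) :
    (petersen.induce Sᶜ).Connected := by
  interval_cases h : S.ncard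
  · rw [(Set.ncard_eq_zero (s := S)).mp h]
    exact connected_induce_compl_empty
  · obtain ⟨u, rfl⟩ := Set.ncard_eq_one.mp h
    obtain ⟨σ, rfl⟩ := exists_aut_apply_eq u
    rw [← Set.image_singleton]
    exact ((aut σ).induceCompl _).connected_iff.mp connected_induce_compl_singleton
  · obtain ⟨u, v, huv, rfl⟩ := Set.ncard_eq_two.mp h
    obtain ⟨φ, rfl, rfl | rfl⟩ := exists_iso_of_ne huv <;> rw [← Set.image_pair]
    · exact (φ.induceCompl _).connected_iff.mp connected_induce_compl_adj
    · exact (φ.induceCompl _).connected_iff.mp connected_induce_compl_nonadj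

end Petersen

theorem petersen_isBrick : IsBrick petersen :=
  ⟨⟨by decide, fun _ => Petersen.connected_induce_compl_of_ncard_le_two⟩,
    fun _ _ => Petersen.hasPerfectMatching_induce_compl_pair⟩
end

section
/- For every n ≥ 2 and every edge e of the graph G_n defined below, the graph G_n \ e contains a vertex of degree two; consequently G_n \ e is not a brick. -/
open SimpleGraph

/-- The graph G_n: vertices x, y, z, t (as inl 0, inl 1, inl 2, inl 3) and
u_i = inr (0, i), v_i = inr (1, i); edges xt, yt, zt and, for each i,
the edges x u_i, y u_i, y v_i, z v_i and u_i v_i. -/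
def Gn (n : ℕ) : SimpleGraph (Fin 4 ⊕ (Fin 2 × Fin n)) :=
  SimpleGraph.fromRel (fun a b =>
    (a = .inl 0 ∧ b = .inl 3) ∨ (a = .inl 1 ∧ b = .inl 3) ∨ (a = .inl 2 ∧ b = .inl 3) ∨
    (∃ i : Fin n,
      (a = .inl 0 ∧ b = .inr (0, i)) ∨ (a = .inl 1 ∧ b = .inr (0, i)) ∨
      (a = .inl 1 ∧ b = .inr (1, i)) ∨ (a = .inl 2 ∧ b = .inr (1, i)) ∨
      (a = .inr (0, i) ∧ b = .inr (1, i))))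

/-!
Since `{x, y, z}` is independent in `G_n`, every edge has an endpoint among `t, u_i, v_i`, and
these vertices have degree three; deleting the edge leaves that endpoint with degree two.
A vertex of degree at most two becomes isolated once its neighbourhood is deleted, while at
least two vertices remain, so the graph is not 3-connected.
-/

namespace SimpleGraph

variable {V : Type*} (G : SimpleGraph V)

theorem neighborSet_deleteEdges_singleton (w a : V) :
    (G.deleteEdges {s(w, a)}).neighborSet w = G.neighborSet w \ {a} := by
  ext u
  simp only [mem_neighborSet, deleteEdges_adj, Set.mem_singleton_iff, Sym2.eq, Sym2.rel_iff',
    Set.mem_sdiff, Prod.mk.injEq, Prod.swap_prod_mk]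
  grind

theorem ncard_neighborSet_deleteEdges_of_adj {w a : V} (ha : G.Adj w a) :
    ((G.deleteEdges {s(w, a)}).neighborSet w).ncard = (G.neighborSet w).ncard - 1 := by
  rw [neighborSet_deleteEdges_singleton]
  exact Set.ncard_sdiff_singleton_of_mem ha

theorem exists_ncard_neighborSet_deleteEdges_eq {S : Set V} {k : ℕ} (hS : G.IsIndepSet S)
    (hdeg : ∀ w ∉ S, (G.neighborSet w).ncard = k + 1) {e : Sym2 V} (he : e ∈ G.edgeSet) :
    ∃ v, ((G.deleteEdges {e}).neighborSet v).ncard = k := by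
  induction e using Sym2.ind with | _ a b => ?_
  have hab : G.Adj a b := he
  by_cases ha : a ∈ S
  · have hb : b ∉ S := fun hb => hS ha hb hab.ne hab
    refine ⟨b, ?_⟩
    rw [Sym2.eq_swap, G.ncard_neighborSet_deleteEdges_of_adj hab.symm, hdeg b hb,
      Nat.add_sub_cancel]
  · refine ⟨a, ?_⟩
    rw [G.ncard_neighborSet_deleteEdges_of_adj hab, hdeg a ha, Nat.add_sub_cancel]

theorem not_isThreeConnected_of_ncard_neighborSet_le_two [Fintype V] {v : V}
    (hv : (G.neighborSet v).ncard ≤ 2) : ¬ IsThreeConnected G := by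
  rintro ⟨hcard, hconn⟩
  have : Nontrivial ↥(G.neighborSet v)ᶜ := by
    rw [Set.nontrivial_coe_sort, ← Set.one_lt_ncard_iff_nontrivial]
    have hsplit := Set.ncard_add_ncard_compl (G.neighborSet v)
    rw [Nat.card_eq_fintype_card] at hsplit
    omega
  obtain ⟨u, hu⟩ :=
    (hconn _ hv).preconnected.exists_adj_of_nontrivial ⟨v, G.notMem_neighborSet_self⟩
  exact u.2 (by simpa using hu)

theorem not_isBrick_of_ncard_neighborSet_le_two [Fintype V] {v : V}
    (hv : (G.neighborSet v).ncard ≤ 2) : ¬ IsBrick G :=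
  fun h => G.not_isThreeConnected_of_ncard_neighborSet_le_two hv h.1

end SimpleGraph

section Gn

variable {n : ℕ}

theorem Gn_isIndepSet_xyz : (Gn n).IsIndepSet {.inl 0, .inl 1, .inl 2} := by
  simp [isIndepSet_iff, Set.Pairwise, Gn]

theorem Gn_neighborSet_t : (Gn n).neighborSet (.inl 3) = {.inl 0, .inl 1, .inl 2} := by
  ext u; grind [Gn, fromRel_adj, mem_neighborSet]

theorem Gn_neighborSet_u (i : Fin n) :
    (Gn n).neighborSet (.inr (0, i)) = {.inl 0, .inl 1, .inr (1, i)} := by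
  ext u; grind [Gn, fromRel_adj, mem_neighborSet]

theorem Gn_neighborSet_v (i : Fin n) :
    (Gn n).neighborSet (.inr (1, i)) = {.inl 1, .inl 2, .inr (0, i)} := by
  ext u; grind [Gn, fromRel_adj, mem_neighborSet]

theorem Gn_ncard_neighborSet_of_notMem {w : Fin 4 ⊕ (Fin 2 × Fin n)}
    (hw : w ∉ ({.inl 0, .inl 1, .inl 2} : Set _)) : ((Gn n).neighborSet w).ncard = 3 := by
  match w with
  | .inl 0 | .inl 1 | .inl 2 => simp at hw
  | .inl 3 => simp [Gn_neighborSet_t, Set.ncard_insert_of_notMem]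
  | .inr (0, i) => simp [Gn_neighborSet_u, Set.ncard_insert_of_notMem]
  | .inr (1, i) => simp [Gn_neighborSet_v, Set.ncard_insert_of_notMem]

end Gn

theorem Gn_delete_edge_degree_two_general (n : ℕ) :
    ∀ e ∈ (Gn n).edgeSet,
      (∃ v, (((Gn n).deleteEdges {e}).neighborSet v).ncard = 2) ∧
      ¬ IsBrick ((Gn n).deleteEdges {e}) := by
  intro e he
  obtain ⟨v, hv⟩ := (Gn n).exists_ncard_neighborSet_deleteEdges_eq Gn_isIndepSet_xyz
    (fun _ => Gn_ncard_neighborSet_of_notMem) he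
  exact ⟨⟨v, hv⟩, not_isBrick_of_ncard_neighborSet_le_two _ hv.le⟩

theorem Gn_delete_edge_degree_two (n : ℕ) (hn : 2 ≤ n) :
    ∀ e ∈ (Gn n).edgeSet,
      (∃ v, (((Gn n).deleteEdges {e}).neighborSet v).ncard = 2) ∧
      ¬ IsBrick ((Gn n).deleteEdges {e}) :=
  Gn_delete_edge_degree_two_general n
end
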